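/- arXiv:1112.1970 — 3 statements merged into one kernel-verified Lean document; each statement's English description precedes it below -/
import Mathlib

section
/- For every real constant c > 0 there exist a positive integer n and a subset A of the Cayley graph X of (ℤ/nℤ) × (ℤ/nℤ) with generating set {(±1,0),(0,±1)} such that 0 < |A| ≤ n²/2 and |∂A| · depth(A) < c · |A| (equivalently |∂A|/|A| < c/depth(A)). -/
/-- The (outer vertex) boundary of a set `A` in a simple graph. -/
def SimpleGraph.boundarySet {V : Type*} (G : SimpleGraph V) (A : Set V) : Set V :=
  {u | u ∉ A ∧ ∃ v ∈ A, G.Adj u v}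

/-- The graph distance from a vertex to a set of vertices. -/
noncomputable def SimpleGraph.distToSet {V : Type*} (G : SimpleGraph V) (u : V) (A : Set V) : ℕ :=
  sInf ((fun v => G.dist u v) '' A)

/-- The depth of a set: the supremum over `u ∈ A` of the distance from `u` to the complement. -/
noncomputable def SimpleGraph.depthSet {V : Type*} (G : SimpleGraph V) (A : Set V) : ℕ :=
  sSup ((fun u => G.distToSet u Aᶜ) '' A)

/-- The Cayley graph of the lattice ℤ² with its standard generating set:
`u` and `v` are adjacent iff they differ by `1` in exactly one coordinate. -/
def zsqGraph : SimpleGraph (ℤ × ℤ) where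
  Adj u v := |u.1 - v.1| + |u.2 - v.2| = 1
  symm := by
    constructor
    intro u v h
    rw [abs_sub_comm v.1, abs_sub_comm v.2]
    exact h
  loopless := by constructor; intro u h; simp at h

/-- The Cayley graph of a group `G` with respect to a generating set `S`. -/
def cayleyGraph {G : Type*} [Group G] (S : Set G) : SimpleGraph G where
  Adj x y := x ≠ y ∧ x⁻¹ * y ∈ S ∪ S⁻¹
  symm := by
    constructor
    rintro x y ⟨hxy, hmem⟩
    refine ⟨hxy.symm, ?_⟩
    have h : y⁻¹ * x = (x⁻¹ * y)⁻¹ := by group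
    rw [h]
    rcases hmem with h' | h'
    · exact Or.inr (Set.inv_mem_inv.mpr h')
    · exact Or.inl (by simpa using h')
  loopless := ⟨fun x h => h.1 rfl⟩

/-- `ballCard S n` is the number of vertices in the ball of radius `n`
(centered at the identity) in the Cayley graph of `G` with respect to `S`. -/
noncomputable def ballCard {G : Type*} [Group G] (S : Set G) (n : ℕ) : ℕ :=
  {x : G | (cayleyGraph S).dist 1 x ≤ n}.ncard

/-- The Cayley graph of `(ℤ/nℤ) × (ℤ/nℤ)` with generating set `{(±1,0),(0,±1)}`. -/
def torusGraph (n : ℕ) : SimpleGraph (ZMod n × ZMod n) where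
  Adj u v := u ≠ v ∧
    u - v ∈ ({(1, 0), (-1, 0), (0, 1), (0, -1)} : Set (ZMod n × ZMod n))
  symm := by
    constructor
    rintro u v ⟨hne, h⟩
    refine ⟨hne.symm, ?_⟩
    have hvu : v - u = -(u - v) := by ring
    simp only [Set.mem_insert_iff, Set.mem_singleton_iff] at h ⊢
    rcases h with h | h | h | h <;>
      rw [hvu, h] <;> simp [Prod.ext_iff]
  loopless := by
    constructor
    intro u h
    exact h.1 rfl

/-! Take `n = 2d²` and let `A` be the half-torus strip `{(x, y) | x < d²}` with the points
of `(dℤ/nℤ)²` removed. The strip has two columns, `2n = 4d²` vertices, as boundary, and the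
`2d²` removed points add at most that many more; every vertex is within distance `2d` of a
removed point, so `depth A ≤ 2d`. Thus `|∂A| · depth A ≤ 12d³` while `|A| ≥ d⁴`, and
`12 / d < c` for large `d`. -/

namespace SimpleGraph

variable {V : Type*} (G : SimpleGraph V)

theorem boundarySet_sdiff_subset (S P : Set V) :
    G.boundarySet (S \ P) ⊆ G.boundarySet S ∪ (S ∩ P) := by
  rintro u ⟨hu, v, ⟨hvS, -⟩, huv⟩
  by_cases huS : u ∈ S
  · exact Or.inr ⟨huS, not_not.mp fun huP => hu ⟨huS, huP⟩⟩
  · exact Or.inl ⟨huS, v, hvS, huv⟩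

theorem depthSet_le_of_forall_exists_dist_le {A : Set V} {k : ℕ}
    (h : ∀ u ∈ A, ∃ v ∉ A, G.dist u v ≤ k) : G.depthSet A ≤ k := by
  refine csSup_le' ?_
  rintro _ ⟨u, hu, rfl⟩
  obtain ⟨v, hv, huv⟩ := h u hu
  exact (Nat.sInf_le (Set.mem_image_of_mem (G.dist u) hv)).trans huv

section AddMonoid

variable {G} [AddMonoid V]

theorem exists_walk_add_nsmul {g : V} (hg : ∀ v, G.Adj v (v + g)) (u : V) (k : ℕ) :
    ∃ p : G.Walk u (u + k • g), p.length = k := by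
  induction k with
  | zero => exact ⟨(Walk.nil : G.Walk u u).copy rfl (by simp), by simp⟩
  | succ k ih =>
    obtain ⟨p, hp⟩ := ih
    exact ⟨(p.concat (hg _)).copy rfl (by rw [succ_nsmul, add_assoc]), by simp [hp]⟩

theorem dist_add_nsmul_add_nsmul_le {g h : V} (hg : ∀ v, G.Adj v (v + g))
    (hh : ∀ v, G.Adj v (v + h)) (u : V) (a b : ℕ) :
    G.dist u (u + a • g + b • h) ≤ a + b := by
  obtain ⟨p, hp⟩ := exists_walk_add_nsmul hg u a
  obtain ⟨q, hq⟩ := exists_walk_add_nsmul hh (u + a • g) b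
  simpa [hp, hq] using dist_le (p.append q)

end AddMonoid

end SimpleGraph

namespace ZMod

variable {n : ℕ}

theorem ncard_setOf_val_lt [NeZero n] {m : ℕ} (hm : m ≤ n) :
    {x : ZMod n | x.val < m}.ncard = m := by
  have hrange : Set.Iio m ⊆ Set.range (val : ZMod n → ℕ) :=
    fun k hk => ⟨k, val_cast_of_lt (lt_of_lt_of_le hk hm)⟩
  exact (Set.ncard_preimage_of_injective_subset_range (val_injective n) hrange).trans
    (Set.ncard_Iio_nat m)

theorem ncard_setOf_val_lt_mul_and_dvd_le [NeZero n] (k d : ℕ) :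
    {x : ZMod n | x.val < k * d ∧ d ∣ x.val}.ncard ≤ k := by
  have hsub : {x : ZMod n | x.val < k * d ∧ d ∣ x.val} ⊆
      (fun i : ℕ => ((d * i : ℕ) : ZMod n)) '' Set.Iio k := by
    rintro x ⟨hlt, i, hi⟩
    refine ⟨i, ?_, by simp only [← hi, natCast_zmod_val]⟩
    rw [hi, mul_comm k] at hlt
    exact Nat.lt_of_mul_lt_mul_left hlt
  calc _ ≤ _ := Set.ncard_le_ncard hsub (Set.toFinite _)
    _ ≤ (Set.Iio k).ncard := Set.ncard_image_le (Set.finite_Iio k)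
    _ = k := Set.ncard_Iio_nat k

theorem exists_lt_dvd_val_sub [NeZero n] (x : ZMod n) {d : ℕ} (hd : 0 < d) (hdn : d ≤ n) :
    ∃ a < d, d ∣ (x - (a : ZMod n)).val := by
  have hlt : x.val % d < d := Nat.mod_lt _ hd
  have hval : ((x.val % d : ℕ) : ZMod n).val = x.val % d := val_cast_of_lt (hlt.trans_le hdn)
  refine ⟨x.val % d, hlt, ?_⟩
  rw [val_sub (hval.symm ▸ Nat.mod_le _ _), hval]
  exact Nat.dvd_sub_mod _

theorem eq_natCast_or_eq_neg_one_of_val_lt_of_le [Fact (1 < n)] {m : ℕ} (hm : m < n)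
    {x y : ZMod n} (hy : y.val < m) (hx : m ≤ x.val) (hxy : x = y + 1 ∨ x + 1 = y) :
    x = m ∨ x = -1 := by
  have val_add_one (z : ZMod n) : (z + 1).val = (z.val + 1) % n := by rw [val_add, val_one]
  rcases hxy with rfl | rfl
  · left
    rw [val_add_one, Nat.mod_eq_of_lt (by omega)] at hx
    rw [← natCast_zmod_val (y + 1), val_add_one, Nat.mod_eq_of_lt (by omega)]
    congr 1
    omega
  · right
    have hxn : x.val + 1 = n := by
      by_contra hne
      rw [val_add_one, Nat.mod_eq_of_lt (by have := x.val_lt; omega)] at hy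
      omega
    refine eq_neg_of_add_eq_zero_left ?_
    rw [← natCast_zmod_val x, ← Nat.cast_add_one, hxn, natCast_self]

end ZMod

section Torus

variable {n : ℕ}

theorem torusGraph_adj_add_one_zero [Fact (1 < n)] (u : ZMod n × ZMod n) :
    (torusGraph n).Adj u (u + (1, 0)) :=
  ⟨by simp [Prod.ext_iff], by simp⟩

theorem torusGraph_adj_add_zero_one [Fact (1 < n)] (u : ZMod n × ZMod n) :
    (torusGraph n).Adj u (u + (0, 1)) :=
  ⟨by simp [Prod.ext_iff], by simp⟩

theorem torusGraph_adj_fst {u v : ZMod n × ZMod n} (h : (torusGraph n).Adj u v) :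
    (u.1 = v.1 + 1 ∨ u.1 + 1 = v.1) ∨ u.1 = v.1 := by
  obtain ⟨-, h⟩ := h
  simp only [Set.mem_insert_iff, Set.mem_singleton_iff, Prod.ext_iff, Prod.fst_sub] at h
  grind

def torusStrip (n m : ℕ) : Set (ZMod n × ZMod n) :=
  {x : ZMod n | x.val < m} ×ˢ Set.univ

def torusLattice (n d : ℕ) : Set (ZMod n × ZMod n) :=
  {p | d ∣ p.1.val ∧ d ∣ p.2.val}

theorem ncard_torusStrip [NeZero n] {m : ℕ} (hm : m ≤ n) : (torusStrip n m).ncard = m * n := by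
  rw [torusStrip, Set.ncard_prod, ZMod.ncard_setOf_val_lt hm, Set.ncard_univ, Nat.card_zmod]

theorem boundarySet_torusStrip_subset [Fact (1 < n)] {m : ℕ} (hm : m < n) :
    (torusGraph n).boundarySet (torusStrip n m) ⊆
      ({(m : ZMod n), -1} : Set (ZMod n)) ×ˢ Set.univ := by
  rintro u ⟨hu, v, hv, huv⟩
  have hum : m ≤ u.1.val := by simpa [torusStrip] using hu
  have hvm : v.1.val < m := hv.1
  refine ⟨?_, trivial⟩
  rcases torusGraph_adj_fst huv with h | h
  · exact ZMod.eq_natCast_or_eq_neg_one_of_val_lt_of_le hm hvm hum h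
  · exact absurd (h ▸ hvm) hum.not_gt

theorem ncard_boundarySet_torusStrip_le [Fact (1 < n)] {m : ℕ} (hm : m < n) :
    ((torusGraph n).boundarySet (torusStrip n m)).ncard ≤ 2 * n := by
  calc _ ≤ (({(m : ZMod n), -1} : Set (ZMod n)) ×ˢ (Set.univ : Set (ZMod n))).ncard :=
        Set.ncard_le_ncard (boundarySet_torusStrip_subset hm) (Set.toFinite _)
    _ ≤ 2 * n := by
        rw [Set.ncard_prod, Set.ncard_univ, Nat.card_zmod]
        exact Nat.mul_le_mul_right _ ((Set.ncard_insert_le _ _).trans (by simp))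

theorem ncard_torusStrip_inter_torusLattice_le [NeZero n] {k l d : ℕ} (hn : n = l * d) :
    (torusStrip n (k * d) ∩ torusLattice n d).ncard ≤ k * l := by
  have h : torusStrip n (k * d) ∩ torusLattice n d =
      {x : ZMod n | x.val < k * d ∧ d ∣ x.val} ×ˢ
        {y : ZMod n | y.val < l * d ∧ d ∣ y.val} := by
    ext ⟨x, y⟩
    simp only [torusStrip, torusLattice, Set.mem_inter_iff, Set.mem_prod, Set.mem_ofPred_eq,
      Set.mem_univ, and_true, true_and, ← hn, y.val_lt]
    tauto
  rw [h, Set.ncard_prod]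
  exact Nat.mul_le_mul (ZMod.ncard_setOf_val_lt_mul_and_dvd_le k d)
    (ZMod.ncard_setOf_val_lt_mul_and_dvd_le l d)

theorem depthSet_sdiff_torusLattice_le [Fact (1 < n)] {d : ℕ} (hd : 0 < d) (hdn : d ≤ n)
    (S : Set (ZMod n × ZMod n)) : (torusGraph n).depthSet (S \ torusLattice n d) ≤ 2 * d := by
  refine SimpleGraph.depthSet_le_of_forall_exists_dist_le _ fun ⟨x, y⟩ _ => ?_
  obtain ⟨a, ha, hxa⟩ := ZMod.exists_lt_dvd_val_sub x hd hdn
  obtain ⟨b, hb, hyb⟩ := ZMod.exists_lt_dvd_val_sub y hd hdn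
  refine ⟨(x - a, y - b), fun h => h.2 ⟨hxa, hyb⟩, ?_⟩
  have hxy : (x, y) = (x - a, y - b) + a • (1, 0) + b • (0, 1) := by ext <;> simp
  rw [SimpleGraph.dist_comm, hxy]
  calc _ ≤ a + b := SimpleGraph.dist_add_nsmul_add_nsmul_le torusGraph_adj_add_one_zero
        torusGraph_adj_add_zero_one _ a b
    _ ≤ 2 * d := by omega

end Torus

theorem exists_torus_set_small_boundary_and_depth {d : ℕ} (hd : 2 ≤ d) :
    ∃ A : Set (ZMod (2 * d ^ 2) × ZMod (2 * d ^ 2)),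
      d ^ 4 ≤ A.ncard ∧ 2 * A.ncard ≤ (2 * d ^ 2) ^ 2 ∧
      ((torusGraph (2 * d ^ 2)).boundarySet A).ncard ≤ 6 * d ^ 2 ∧
      (torusGraph (2 * d ^ 2)).depthSet A ≤ 2 * d := by
  have hd2 : 4 ≤ d ^ 2 := by nlinarith
  set n := 2 * d ^ 2 with hn
  have : Fact (1 < n) := ⟨by omega⟩
  set S := torusStrip n (d * d)
  have hS : S.ncard = 2 * d ^ 4 := by rw [ncard_torusStrip (by nlinarith)]; ring
  have hSP : (S ∩ torusLattice n d).ncard ≤ 2 * d ^ 2 :=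
    (ncard_torusStrip_inter_torusLattice_le (l := 2 * d) (by ring)).trans_eq (by ring)
  have hA : (S ∩ torusLattice n d).ncard + (S \ torusLattice n d).ncard = 2 * d ^ 4 := by
    rw [Set.ncard_inter_add_ncard_sdiff_eq_ncard, hS]
  refine ⟨S \ torusLattice n d, by nlinarith, by nlinarith, ?_,
    depthSet_sdiff_torusLattice_le (by omega) (by nlinarith) S⟩
  calc _ ≤ ((torusGraph n).boundarySet S ∪ (S ∩ torusLattice n d)).ncard :=
        Set.ncard_le_ncard ((torusGraph n).boundarySet_sdiff_subset _ _) (Set.toFinite _)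
    _ ≤ ((torusGraph n).boundarySet S).ncard + (S ∩ torusLattice n d).ncard :=
        Set.ncard_union_le _ _
    _ ≤ 2 * n + 2 * d ^ 2 := add_le_add (ncard_boundarySet_torusStrip_le (by nlinarith)) hSP
    _ = 6 * d ^ 2 := by ring

/-- For every real `c > 0` there exist `n ≥ 1` and a set `A` of vertices of the Cayley graph
of `(ℤ/nℤ) × (ℤ/nℤ)` with `0 < |A| ≤ n²/2` and `|∂A| ⬝ depth(A) < c ⬝ |A|`. -/
theorem stmt_1 (c : ℝ) (hc : 0 < c) :
    ∃ n : ℕ, 0 < n ∧ ∃ A : Set (ZMod n × ZMod n),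
      0 < A.ncard ∧ 2 * A.ncard ≤ n ^ 2 ∧
      ((((torusGraph n).boundarySet A).ncard : ℝ) * ((torusGraph n).depthSet A : ℝ))
        < c * (A.ncard : ℝ) := by
  obtain ⟨d, hd, hcd⟩ : ∃ d : ℕ, 2 ≤ d ∧ 12 < c * d := by
    obtain ⟨N, hN⟩ := exists_nat_gt (12 / c)
    refine ⟨max 2 N, le_max_left _ _, ?_⟩
    rw [div_lt_iff₀ hc] at hN
    nlinarith [(Nat.cast_le (α := ℝ)).2 (le_max_right 2 N)]
  obtain ⟨A, hA, hAn, hboundary, hdepth⟩ := exists_torus_set_small_boundary_and_depth hd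
  refine ⟨2 * d ^ 2, by positivity, A, (by positivity : 0 < d ^ 4).trans_le hA, hAn, ?_⟩
  calc _ ≤ (6 * d ^ 2 : ℝ) * (2 * d) := by gcongr <;> exact_mod_cast ‹_›
    _ = 12 * d ^ 3 := by ring
    _ < c * d * d ^ 3 := by gcongr
    _ = c * (d ^ 4 : ℕ) := by push_cast; ring
    _ ≤ c * A.ncard := by gcongr
end

section
/- The quantity a_i(k) = |∂A_i(k)| · depth(A_i(k)) / |A_i(k)| tends to 0 as i and k tend to infinity: for every real c > 0 there exists N such that for all integers i, k ≥ N with i, k > 1, |∂A_i(k)| · depth(A_i(k)) < c · |A_i(k)|. -/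
/-- The square grid `X_i(k) = {(m,n) : 0 ≤ m ≤ ki, 0 ≤ n ≤ ki}`. -/
def Xik (i k : ℤ) : Set (ℤ × ℤ) :=
  {p | 0 ≤ p.1 ∧ p.1 ≤ k * i ∧ 0 ≤ p.2 ∧ p.2 ≤ k * i}

/-- The lattice of removed points `Y_i(k) = {(mi, ni) : 1 ≤ m ≤ k-1, 1 ≤ n ≤ k-1}`. -/
def Yik (i k : ℤ) : Set (ℤ × ℤ) :=
  {p | ∃ m n : ℤ, 1 ≤ m ∧ m ≤ k - 1 ∧ 1 ≤ n ∧ n ≤ k - 1 ∧ p = (m * i, n * i)}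

/-- The set `A_i(k) = X_i(k) \ Y_i(k)`. -/
def Aik (i k : ℤ) : Set (ℤ × ℤ) := Xik i k \ Yik i k


/-!
Every point of `A_i(k)` lies within `ℓ¹`-distance `2i` of a point outside it: either the outer
edge of the square or the removed point `(mi, ni)` at the lower left corner of its cell. Hence
`depth(A_i(k)) ≤ 2i`. The boundary of `X \ Y` lies in `∂X ∪ Y`, so
`|∂A_i(k)| ≤ 4ki + 8 + (k-1)²`, while `|A_i(k)| ≥ (ki+1)² - (k-1)²`. The ratio is therefore
`O(1/k + 1/i)`.
-/

open Set

namespace SimpleGraph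

variable {V : Type*} (G : SimpleGraph V)

theorem boundarySet_diff_subset (X Y : Set V) :
    G.boundarySet (X \ Y) ⊆ G.boundarySet X ∪ Y := by
  rintro u ⟨hu : u ∉ X \ Y, v, hv, hadj⟩
  by_cases hX : u ∈ X
  · right
    by_contra hY
    exact hu ⟨hX, hY⟩
  · exact Or.inl ⟨hX, v, hv.1, hadj⟩

variable {G}

theorem depthSet_le {A : Set V} {r : ℕ} (h : ∀ u ∈ A, ∃ w ∉ A, G.dist u w ≤ r) :
    G.depthSet A ≤ r := by
  refine csSup_le' ?_
  rintro _ ⟨u, hu, rfl⟩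
  obtain ⟨w, hw, hdist⟩ := h u hu
  exact (Nat.sInf_le (mem_image_of_mem (G.dist u) hw)).trans hdist

end SimpleGraph

theorem zsqGraph_adj_iff {u v : ℤ × ℤ} :
    zsqGraph.Adj u v ↔ (u.1 - v.1).natAbs + (u.2 - v.2).natAbs = 1 := by
  change |u.1 - v.1| + |u.2 - v.2| = 1 ↔ _
  rw [Int.abs_eq_natAbs, Int.abs_eq_natAbs]
  omega

theorem zsqGraph_exists_adj_closer {u v : ℤ × ℤ} (h : u ≠ v) :
    ∃ w, zsqGraph.Adj u w ∧
      (w.1 - v.1).natAbs + (w.2 - v.2).natAbs + 1 = (u.1 - v.1).natAbs + (u.2 - v.2).natAbs := by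
  obtain ⟨a, b⟩ := u
  obtain ⟨c, d⟩ := v
  rcases lt_trichotomy a c with hac | rfl | hac
  · exact ⟨(a + 1, b), zsqGraph_adj_iff.2 (by omega), by omega⟩
  · rcases lt_trichotomy b d with hbd | rfl | hbd
    · exact ⟨(a, b + 1), zsqGraph_adj_iff.2 (by omega), by omega⟩
    · exact absurd rfl h
    · exact ⟨(a, b - 1), zsqGraph_adj_iff.2 (by omega), by omega⟩
  · exact ⟨(a - 1, b), zsqGraph_adj_iff.2 (by omega), by omega⟩

theorem zsqGraph_exists_walk (v : ℤ × ℤ) : ∀ (n : ℕ) (u : ℤ × ℤ),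
    (u.1 - v.1).natAbs + (u.2 - v.2).natAbs = n → ∃ p : zsqGraph.Walk u v, p.length = n
  | 0, u, h => by
    obtain rfl : u = v := Prod.ext (by omega) (by omega)
    exact ⟨.nil, rfl⟩
  | n + 1, u, h => by
    obtain ⟨w, hadj, hw⟩ :=
      zsqGraph_exists_adj_closer (u := u) (v := v) (by rintro rfl; simp at h)
    obtain ⟨p, hp⟩ := zsqGraph_exists_walk v n w (by omega)
    exact ⟨.cons hadj p, by simp [hp]⟩

theorem zsqGraph_dist_le (u v : ℤ × ℤ) :
    zsqGraph.dist u v ≤ (u.1 - v.1).natAbs + (u.2 - v.2).natAbs := by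
  obtain ⟨p, hp⟩ := zsqGraph_exists_walk v _ u rfl
  exact hp ▸ SimpleGraph.dist_le p

theorem zsqGraph_boundarySet_Icc_prod_subset (a b : ℤ) :
    zsqGraph.boundarySet (Icc a b ×ˢ Icc a b) ⊆
      (Icc (a - 1) (b + 1) ×ˢ Icc (a - 1) (b + 1)) \ (Icc a b ×ˢ Icc a b) := by
  rintro u ⟨hu, v, ⟨⟨hv₁, hv₁'⟩, ⟨hv₂, hv₂'⟩⟩, hadj⟩
  rw [zsqGraph_adj_iff] at hadj
  exact ⟨⟨⟨by omega, by omega⟩, ⟨by omega, by omega⟩⟩, hu⟩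

theorem Int.ncard_Icc_prod_Icc {a b : ℤ} (h : a ≤ b + 1) :
    ((Icc a b ×ˢ Icc a b).ncard : ℤ) = (b + 1 - a) ^ 2 := by
  rw [ncard_prod, ← Finset.coe_Icc, ncard_coe_finset, Nat.cast_mul, Int.card_Icc_of_le _ _ h, sq]

section Aik

variable {i k : ℤ}

theorem Xik_eq (i k : ℤ) : Xik i k = Icc 0 (k * i) ×ˢ Icc 0 (k * i) := by
  ext ⟨x, y⟩
  exact and_assoc.symm

theorem Yik_eq (i k : ℤ) :
    Yik i k = (fun p : ℤ × ℤ => (p.1 * i, p.2 * i)) '' (Icc 1 (k - 1) ×ˢ Icc 1 (k - 1)) := by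
  ext p
  constructor
  · rintro ⟨m, n, hm, hm', hn, hn', rfl⟩
    exact ⟨(m, n), ⟨⟨hm, hm'⟩, ⟨hn, hn'⟩⟩, rfl⟩
  · rintro ⟨⟨m, n⟩, ⟨⟨hm, hm'⟩, ⟨hn, hn'⟩⟩, rfl⟩
    exact ⟨m, n, hm, hm', hn, hn', rfl⟩

theorem Yik_finite (i k : ℤ) : (Yik i k).Finite := by
  rw [Yik_eq]
  exact ((finite_Icc _ _).prod (finite_Icc _ _)).image _

theorem Yik_subset_Xik (hi : 0 ≤ i) : Yik i k ⊆ Xik i k := by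
  rintro _ ⟨m, n, hm, hm', hn, hn', rfl⟩
  refine ⟨by positivity, ?_, by positivity, ?_⟩ <;> dsimp only <;> nlinarith

theorem ncard_Xik (hki : 0 ≤ k * i) : ((Xik i k).ncard : ℤ) = (k * i + 1) ^ 2 := by
  rw [Xik_eq, Int.ncard_Icc_prod_Icc (by omega), sub_zero]

theorem ncard_Yik_le (hk : 1 ≤ k) : ((Yik i k).ncard : ℤ) ≤ (k - 1) ^ 2 := by
  rw [Yik_eq]
  calc ((_ '' (Icc 1 (k - 1) ×ˢ Icc 1 (k - 1))).ncard : ℤ)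
      ≤ (Icc 1 (k - 1) ×ˢ Icc 1 (k - 1)).ncard := by
        exact_mod_cast ncard_image_le ((finite_Icc _ _).prod (finite_Icc _ _))
    _ = (k - 1) ^ 2 := by rw [Int.ncard_Icc_prod_Icc (by omega)]; ring

theorem ncard_Aik_ge (hi : 0 ≤ i) (hk : 1 ≤ k) :
    (k * i + 1) ^ 2 - (k - 1) ^ 2 ≤ ((Aik i k).ncard : ℤ) := by
  have hXY := ncard_sdiff_add_ncard_of_subset (Yik_subset_Xik (k := k) hi)
    (Xik_eq i k ▸ toFinite _)
  have hX := ncard_Xik (i := i) (k := k) (by positivity)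
  have hY := ncard_Yik_le (i := i) hk
  rw [Aik]
  omega

theorem ncard_boundarySet_Xik_le (hki : 0 ≤ k * i) :
    ((zsqGraph.boundarySet (Xik i k)).ncard : ℤ) ≤ 4 * (k * i) + 8 := by
  set S := Icc (0 - 1) (k * i + 1) ×ˢ Icc (0 - 1) (k * i + 1)
  have hXS : Xik i k ⊆ S := Xik_eq i k ▸ prod_mono (Icc_subset_Icc (by omega) (by omega))
    (Icc_subset_Icc (by omega) (by omega))
  have hcard := ncard_sdiff_add_ncard_of_subset hXS
  have hS := Int.ncard_Icc_prod_Icc (a := 0 - 1) (b := k * i + 1) (by omega)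
  have hX := ncard_Xik (i := i) (k := k) hki
  have hB : (zsqGraph.boundarySet (Xik i k)).ncard ≤ (S \ Xik i k).ncard :=
    ncard_le_ncard (Xik_eq i k ▸ zsqGraph_boundarySet_Icc_prod_subset 0 (k * i))
  linarith

theorem ncard_boundarySet_Aik_le (hi : 0 ≤ i) (hk : 1 ≤ k) :
    ((zsqGraph.boundarySet (Aik i k)).ncard : ℤ) ≤ 4 * (k * i) + 8 + (k - 1) ^ 2 := by
  have hXfin : (zsqGraph.boundarySet (Xik i k)).Finite :=
    Xik_eq i k ▸ (toFinite _).subset (zsqGraph_boundarySet_Icc_prod_subset 0 (k * i))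
  have hsub := ncard_le_ncard (zsqGraph.boundarySet_diff_subset (Xik i k) (Yik i k))
    (hXfin.union (Yik_finite i k))
  have hunion := ncard_union_le (zsqGraph.boundarySet (Xik i k)) (Yik i k)
  have hX := ncard_boundarySet_Xik_le (i := i) (k := k) (by positivity)
  have hY := ncard_Yik_le (i := i) hk
  rw [Aik]
  omega

theorem exists_mul_le_lt_add_of_le_of_lt_mul (hi : 0 < i) {x : ℤ} (hx : i ≤ x)
    (hxk : x < k * i) :
    ∃ m, 1 ≤ m ∧ m ≤ k - 1 ∧ m * i ≤ x ∧ x < m * i + i := by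
  refine ⟨x / i, (Int.le_ediv_iff_mul_le hi).2 (by simpa using hx), ?_,
    Int.ediv_mul_le x hi.ne', by linarith [Int.lt_ediv_add_one_mul_self x hi]⟩
  have := (Int.ediv_lt_iff_lt_mul hi).2 hxk
  omega

theorem exists_notMem_Aik_natAbs_le (hi : 0 < i) {u : ℤ × ℤ} (hu : u ∈ Aik i k) :
    ∃ w ∉ Aik i k, ((u.1 - w.1).natAbs + (u.2 - w.2).natAbs : ℤ) ≤ 2 * i := by
  obtain ⟨x, y⟩ := u
  obtain ⟨⟨hx, hx', hy, hy'⟩, -⟩ := hu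
  have notMem_of_outside : ∀ w : ℤ × ℤ,
      (w.1 < 0 ∨ k * i < w.1 ∨ w.2 < 0 ∨ k * i < w.2) → w ∉ Aik i k := by
    rintro w hw ⟨⟨h₁, h₂, h₃, h₄⟩, -⟩
    omega
  by_cases hxl : x < i
  · exact ⟨(-1, y), notMem_of_outside _ (by simp), by dsimp only; omega⟩
  by_cases hxr : x = k * i
  · exact ⟨(k * i + 1, y), notMem_of_outside _ (by simp), by dsimp only; omega⟩
  by_cases hyl : y < i
  · exact ⟨(x, -1), notMem_of_outside _ (by simp), by dsimp only; omega⟩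
  by_cases hyr : y = k * i
  · exact ⟨(x, k * i + 1), notMem_of_outside _ (by simp), by dsimp only; omega⟩
  obtain ⟨m, hm, hm', hmx, hxm⟩ :=
    exists_mul_le_lt_add_of_le_of_lt_mul (k := k) hi (not_lt.1 hxl) (by omega)
  obtain ⟨n, hn, hn', hny, hyn⟩ :=
    exists_mul_le_lt_add_of_le_of_lt_mul (k := k) hi (not_lt.1 hyl) (by omega)
  exact ⟨(m * i, n * i), fun h => h.2 ⟨m, n, hm, hm', hn, hn', rfl⟩, by dsimp only; omega⟩

theorem depthSet_Aik_le (hi : 0 < i) : (zsqGraph.depthSet (Aik i k) : ℤ) ≤ 2 * i := by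
  suffices zsqGraph.depthSet (Aik i k) ≤ (2 * i).toNat by omega
  refine SimpleGraph.depthSet_le fun u hu => ?_
  obtain ⟨w, hw, hdist⟩ := exists_notMem_Aik_natAbs_le hi hu
  exact ⟨w, hw, (zsqGraph_dist_le u w).trans (by omega)⟩

end Aik

theorem frame_mul_depth_lt_mul_area {c K I : ℝ} (hK : 2 ≤ K) (hI : 2 ≤ I)
    (hcK : 32 ≤ c * K) (hcI : 32 ≤ c * I) :
    (4 * (K * I) + 8 + (K - 1) ^ 2) * (2 * I) < c * ((K * I + 1) ^ 2 - (K - 1) ^ 2) := by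
  have hc : 0 < c := by nlinarith
  have h₁ : 32 * (K * I ^ 2) ≤ c * K * (K * I ^ 2) := by gcongr
  have h₂ : 32 * (K ^ 2 * I) ≤ c * I * (K ^ 2 * I) := by gcongr
  have h₃ : 16 * I ≤ 4 * K * I ^ 2 := by nlinarith
  have h₄ : (K - 1) ^ 2 * I ≤ K ^ 2 * I := by nlinarith
  have h₅ : c * K ^ 2 * 4 ≤ c * K ^ 2 * I ^ 2 := by gcongr; nlinarith
  have h₆ : 0 < c * K * I := by positivity
  linarith

/-- `a_i(k) = |∂A_i(k)| ⬝ depth(A_i(k)) / |A_i(k)| → 0` as `i, k → ∞`: for every real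
`c > 0` there is `N` so that for all integers `i, k ≥ N` with `i, k > 1` we have
`|∂A_i(k)| ⬝ depth(A_i(k)) < c ⬝ |A_i(k)|`. -/
theorem stmt_6 (c : ℝ) (hc : 0 < c) :
    ∃ N : ℕ, ∀ i k : ℤ, 1 < i → 1 < k → (N : ℤ) ≤ i → (N : ℤ) ≤ k →
      (((zsqGraph.boundarySet (Aik i k)).ncard : ℝ) * (zsqGraph.depthSet (Aik i k) : ℝ))
        < c * ((Aik i k).ncard : ℝ) := by
  obtain ⟨N, hN⟩ := exists_nat_ge (32 / c)
  refine ⟨max N 2, fun i k hi hk hNi hNk => ?_⟩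
  have hNi' : (N : ℝ) ≤ i := by exact_mod_cast (by omega : (N : ℤ) ≤ i)
  have hNk' : (N : ℝ) ≤ k := by exact_mod_cast (by omega : (N : ℤ) ≤ k)
  have hB : ((zsqGraph.boundarySet (Aik i k)).ncard : ℝ) ≤ 4 * (k * i) + 8 + (k - 1) ^ 2 := by
    exact_mod_cast ncard_boundarySet_Aik_le (by omega) (by omega)
  have hD : (zsqGraph.depthSet (Aik i k) : ℝ) ≤ 2 * i := by
    exact_mod_cast depthSet_Aik_le (k := k) (by omega)
  have hA : ((k * i + 1) ^ 2 - (k - 1) ^ 2 : ℝ) ≤ (Aik i k).ncard := by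
    exact_mod_cast ncard_Aik_ge (by omega) (by omega)
  calc ((zsqGraph.boundarySet (Aik i k)).ncard : ℝ) * (zsqGraph.depthSet (Aik i k) : ℝ)
      ≤ (4 * (k * i) + 8 + (k - 1) ^ 2) * (2 * i) :=
        mul_le_mul hB hD (Nat.cast_nonneg _) ((Nat.cast_nonneg _).trans hB)
    _ < c * ((k * i + 1) ^ 2 - (k - 1) ^ 2) :=
        frame_mul_depth_lt_mul_area (by exact_mod_cast hk) (by exact_mod_cast hi)
          ((div_le_iff₀' hc).1 (hN.trans hNk')) ((div_le_iff₀' hc).1 (hN.trans hNi'))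
    _ ≤ c * (Aik i k).ncard := by gcongr
end

section
/- (Wilkie–Van den Dries growth dichotomy) Let G be a group generated by a finite set S and let X be the Cayley graph of G with respect to S. Then exactly one of the following holds: (1) there exist α, β ≥ 0 such that b(n) ≤ α n + β for all natural numbers n; (2) b(n) ≥ (n+1)(n+2)/2 for all natural numbers n. -/
section Periodicity

variable {α : Type*}

def HasPeriodOn (f : ℕ → α) (a b ρ : ℕ) : Prop :=
  ∀ x, a ≤ x → x + ρ < b → f x = f (x + ρ)

def window (f : ℕ → α) (K i : ℕ) : Fin K → α := fun s => f (i + s)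

lemma Nat.exists_modEq_mem_Ico {ρ : ℕ} (hρ : 0 < ρ) (b r : ℕ) :
    ∃ x, b ≤ x ∧ x < b + ρ ∧ x ≡ r [MOD ρ] := by
  refine ⟨b + (r + ρ - b % ρ) % ρ, Nat.le_add_right _ _,
    Nat.add_lt_add_left (Nat.mod_lt _ hρ) _, ?_⟩
  have hb := Nat.div_add_mod b ρ
  have hlt := Nat.mod_lt b hρ
  calc b + (r + ρ - b % ρ) % ρ ≡ b + (r + ρ - b % ρ) [MOD ρ] := (Nat.mod_modEq _ _).add_left _
    _ = ρ * (b / ρ + 1) + r := by rw [Nat.mul_succ]; omega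
    _ ≡ r [MOD ρ] := by simp [Nat.ModEq]

variable {f : ℕ → α} {a b ρ : ℕ}

lemma window_eq_window_add_iff {K p d : ℕ} :
    window f K p = window f K (p + d) ↔ ∀ x, p ≤ x → x < p + K → f x = f (x + d) := by
  refine ⟨fun h x hpx hxK => ?_, fun h => funext fun s => ?_⟩
  · have := congrFun h ⟨x - p, by omega⟩
    simp only [window] at this
    convert this using 2 <;> omega
  · simp only [window]
    rw [h (p + s) (by omega) (by omega)]
    ac_rfl

lemma hasPeriodOn_iff_window_eq {K p d : ℕ} :
    HasPeriodOn f p (p + d + K) d ↔ window f K p = window f K (p + d) := by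
  rw [window_eq_window_add_iff]
  exact forall_congr' fun x => imp_congr_right fun _ => by
    constructor <;> intro h hx <;> exact h (by omega)

namespace HasPeriodOn

lemma extend (h : HasPeriodOn f a b ρ) (hρb : ρ ≤ b) (hb : f (b - ρ) = f b) :
    HasPeriodOn f a (b + 1) ρ := by
  intro x hx hxb
  rcases Nat.lt_or_ge (x + ρ) b with hlt | hge
  · exact h x hx hlt
  · obtain rfl : x = b - ρ := by omega
    rwa [Nat.sub_add_cancel hρb]

lemma eq_add_mul (h : HasPeriodOn f a b ρ) {x : ℕ} (hx : a ≤ x) :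
    ∀ c, x + ρ * c < b → f x = f (x + ρ * c)
  | 0, _ => rfl
  | c + 1, hc => by
    rw [eq_add_mul h hx c (by nlinarith), h _ (by omega) (by nlinarith)]
    ring_nf

lemma eq_of_modEq (h : HasPeriodOn f a b ρ) {x y : ℕ} (hx : a ≤ x) (hy : a ≤ y)
    (hxb : x < b) (hyb : y < b) (hxy : x ≡ y [MOD ρ]) : f x = f y := by
  wlog hle : x ≤ y generalizing x y
  · exact (this hy hx hyb hxb hxy.symm (by omega)).symm
  obtain ⟨c, hc⟩ := (Nat.modEq_iff_dvd' hle).mp hxy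
  obtain rfl : y = x + ρ * c := by omega
  exact h.eq_add_mul hx c hyb

/-- Along the orbit of `b - Δ` under `+ Δ` modulo `ρ`, every step except the one leaving the class
of `b - Δ` can be made inside the shift-invariant stretch, which gives `f (b - Δ) = f (b - ρ)`;
and `f (b - Δ) = f b` directly. -/
lemma extend_of_shift (h : HasPeriodOn f a b ρ) (hρ : 0 < ρ) {Δ : ℕ} (hΔ : 0 < Δ)
    (hab : a + Δ + ρ ≤ b + 1)
    (hshift : ∀ x, b + 1 ≤ x + Δ + ρ → x + Δ ≤ b → f x = f (x + Δ)) :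
    HasPeriodOn f a (b + 1) ρ := by
  have hm : ∃ m, 0 < m ∧ ρ ∣ m * Δ := ⟨ρ, hρ, dvd_mul_right ρ Δ⟩
  have hchain : ∀ i < Nat.find hm, ∀ y, a ≤ y → y < b → y ≡ b + i * Δ [MOD ρ] →
      f y = f (b - ρ) := by
    intro i
    induction i with
    | zero =>
      intro _ y hay hyb hy
      refine h.eq_of_modEq hay (by omega) hyb (by omega) (hy.trans ?_)
      rw [zero_mul, add_zero]
      conv_lhs => rw [← Nat.sub_add_cancel (show ρ ≤ b by omega)]
      exact Nat.add_modEq_left_iff.mpr dvd_rfl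
    | succ i ih =>
      intro hi y hay hyb hy
      obtain ⟨x, hx₁, hx₂, hx⟩ := Nat.exists_modEq_mem_Ico hρ (b + 1 - ρ - Δ) (b + i * Δ)
      have hxb : x + Δ ≠ b := by
        rintro hxb
        refine Nat.find_min hm (Nat.lt_of_succ_le hi) ⟨i.succ_pos, ?_⟩
        rw [← hxb, add_assoc, add_comm Δ, ← Nat.succ_mul] at hx
        exact Nat.add_modEq_left_iff.mp hx.symm
      have hxy : x + Δ ≡ y [MOD ρ] := by
        refine (hx.add_right Δ).trans ?_
        rw [add_assoc, ← Nat.succ_mul]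
        exact hy.symm
      calc f y = f (x + Δ) := (h.eq_of_modEq (by omega) hay (by omega) hyb hxy).symm
        _ = f x := (hshift x (by omega) (by omega)).symm
        _ = f (b - ρ) := ih (by omega) x (by omega) (by omega) hx
  obtain ⟨hm₀, hmΔ⟩ := Nat.find_spec hm
  obtain ⟨k, hk⟩ := Nat.exists_eq_succ_of_ne_zero hm₀.ne'
  have hback : f (b - Δ) = f (b - ρ) := by
    refine hchain k (by omega) (b - Δ) (by omega) (by omega) ?_
    have hsplit : b + k * Δ = b - Δ + Nat.find hm * Δ := by rw [hk, Nat.succ_mul]; omega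
    rw [hsplit]
    exact (Nat.add_modEq_left_iff.mpr hmΔ).symm
  refine h.extend (by omega) ?_
  rw [← hback, hshift (b - Δ) (by omega) (by omega), Nat.sub_add_cancel (by omega)]

lemma window_ne_of_not_hasPeriodOn (h : HasPeriodOn f a b ρ)
    (hbreak : ¬ HasPeriodOn f a (b + 1) ρ) (hρ : 0 < ρ) {K p q : ℕ} (hap : a ≤ p) (hpq : p < q)
    (hqK : b < q + K) (hqρ : q + ρ ≤ b + 1) : window f K p ≠ window f K q := by
  intro heq
  obtain ⟨d, rfl⟩ : ∃ d, q = p + d := ⟨q - p, by omega⟩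
  rw [window_eq_window_add_iff] at heq
  exact hbreak <| h.extend_of_shift hρ (Δ := d) (by omega) (by omega)
    fun x hx₁ hx₂ => heq x (by omega) (by omega)

lemma window_ne_of_minimal (h : HasPeriodOn f a b ρ) {K : ℕ} (hρK : ρ ≤ K)
    (hb : a + ρ + K ≤ b) (hmin : ∀ d, 0 < d → d < ρ → window f K a ≠ window f K (a + d))
    {c₁ c₂ : ℕ} (hc : c₁ < c₂) (hc₂ : c₂ < ρ) :
    window f K (a + c₁) ≠ window f K (a + c₂) := by
  intro heq
  obtain ⟨d, rfl⟩ : ∃ d, c₂ = c₁ + d := ⟨c₂ - c₁, by omega⟩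
  rw [← add_assoc, window_eq_window_add_iff] at heq
  refine hmin d (by omega) (by omega) (hasPeriodOn_iff_window_eq.mp fun z hz hzd => ?_)
  obtain ⟨x, hx₁, hx₂, hxz⟩ := Nat.exists_modEq_mem_Ico (by omega : 0 < ρ) (a + c₁) z
  calc f z = f x := h.eq_of_modEq hz (by omega) (by omega) (by omega) hxz.symm
    _ = f (x + d) := heq x hx₁ (by omega)
    _ = f (z + d) := h.eq_of_modEq (by omega) (by omega) (by omega) (by omega) (hxz.add_right d)

end HasPeriodOn

/-- The `ρ` windows inside one period and the `K - ρ + 1` windows just before the break of the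
period are pairwise distinct. -/
lemma lt_card_of_not_hasPeriodOn {K n : ℕ} {V : Finset (Fin K → α)}
    (hwin : ∀ i, i + K ≤ n → window f K i ∈ V) (h : HasPeriodOn f a b ρ)
    (hbreak : ¬ HasPeriodOn f a (b + 1) ρ) (hρ : 0 < ρ) (hρK : ρ ≤ K) (hb : a + ρ + K ≤ b)
    (hbn : b + K < n + ρ) (hmin : ∀ d, 0 < d → d < ρ → window f K a ≠ window f K (a + d)) :
    K < V.card := by
  set P := Finset.Ico a (a + ρ) ∪ Finset.Icc (b + 1 - K) (b + 1 - ρ)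
  have hP : P.card = K + 1 := by
    rw [Finset.card_union_of_disjoint, Nat.card_Ico, Nat.card_Icc]
    · omega
    · exact Finset.disjoint_left.mpr fun p hp hp' => by simp at hp hp'; omega
  have hne : ∀ p ∈ P, ∀ q ∈ P, p < q → window f K p ≠ window f K q := by
    intro p hp q hq hpq
    simp only [P, Finset.mem_union, Finset.mem_Ico, Finset.mem_Icc] at hp hq
    by_cases hq' : b + 1 ≤ q + K
    · exact h.window_ne_of_not_hasPeriodOn hbreak hρ (by omega) hpq (by omega) (by omega)
    · obtain ⟨c₁, rfl⟩ : ∃ c, p = a + c := ⟨p - a, by omega⟩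
      obtain ⟨c₂, rfl⟩ : ∃ c, q = a + c := ⟨q - a, by omega⟩
      exact h.window_ne_of_minimal hρK hb hmin (by omega) (by omega)
  have hinj : Set.InjOn (window f K) P := by
    intro p hp q hq hpq
    by_contra hne'
    rcases lt_or_gt_of_ne hne' with hlt | hlt
    exacts [hne p hp q hq hlt hpq, hne q hq p hp hlt hpq.symm]
  have hmaps : Set.MapsTo (window f K) P V := by
    intro p hp
    simp only [P, Finset.coe_union, Set.mem_union, Finset.coe_Ico, Finset.coe_Icc, Set.mem_Ico,
      Set.mem_Icc] at hp
    exact hwin p (by omega)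
  have := Finset.card_le_card_of_injOn _ hmaps hinj
  omega

/-- Two of the windows at `0, …, K` coincide, which gives a period; extend the least such period
as far as it goes. If it stopped before `n - K + ρ`, `lt_card_of_not_hasPeriodOn` would produce
`K + 1` distinct windows. -/
theorem exists_period_of_card_window_le {K n : ℕ} {V : Finset (Fin K → α)} (hV : V.card ≤ K)
    (hwin : ∀ i, i + K ≤ n → window f K i ∈ V) :
    ∃ ρ, 0 < ρ ∧ ρ ≤ K ∧ ∀ x, K ≤ x → x + K < n → f x = f (x + ρ) := by
  classical
  rcases lt_or_ge n (2 * K) with hn | hn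
  · exact ⟨1, by omega, by omega, fun x hx hxn => absurd hxn (by omega)⟩
  obtain ⟨i, hi, j, hj, hij, hw⟩ := Finset.exists_ne_map_eq_of_card_lt_of_maps_to
    (s := Finset.range (K + 1)) (by simpa using Nat.lt_succ_of_le hV)
    (fun i hi => hwin i (by simp at hi; omega))
  simp only [Finset.mem_range] at hi hj
  obtain ⟨a, d, hd, hdK, hwd⟩ : ∃ a d, 0 < d ∧ a + d ≤ K ∧ window f K a = window f K (a + d) := by
    rcases lt_or_gt_of_ne hij with hlt | hlt
    · exact ⟨i, j - i, by omega, by omega, by rwa [Nat.add_sub_cancel' hlt.le]⟩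
    · exact ⟨j, i - j, by omega, by omega, by rw [Nat.add_sub_cancel' hlt.le]; exact hw.symm⟩
  have hex : ∃ d, 0 < d ∧ window f K a = window f K (a + d) := ⟨d, hd, hwd⟩
  set ρ := Nat.find hex
  obtain ⟨hρ, hρw⟩ := Nat.find_spec hex
  have hρd : ρ ≤ d := Nat.find_min' hex ⟨hd, hwd⟩
  have hper : HasPeriodOn f a (a + ρ + K) ρ := hasPeriodOn_iff_window_eq.mpr hρw
  obtain ⟨b, hb, hab, hbn, hbreak⟩ : ∃ b, HasPeriodOn f a b ρ ∧ a + ρ + K ≤ b ∧ b ≤ n ∧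
      (b < n → ¬ HasPeriodOn f a (b + 1) ρ) :=
    let P := (HasPeriodOn f a · ρ)
    ⟨Nat.findGreatest P n, Nat.findGreatest_spec (P := P) (m := a + ρ + K) (n := n) (by omega) hper,
      Nat.le_findGreatest (by omega) hper, Nat.findGreatest_le n,
      fun hbn => Nat.findGreatest_is_greatest (P := P) (Nat.lt_succ_self _) hbn⟩
  refine ⟨ρ, hρ, by omega, fun x hx hxn => hb x (by omega) ?_⟩
  by_contra hend
  have := lt_card_of_not_hasPeriodOn hwin hb (hbreak (by omega)) hρ (by omega) hab (by omega)
    fun d hd hdρ hw => Nat.find_min hex hdρ ⟨hd, hw⟩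
  omega

end Periodicity

lemma Set.Finite.setOf_forall_mem_length_le {α : Type*} {s : Set α} (hs : s.Finite) (n : ℕ) :
    {l : List α | (∀ x ∈ l, x ∈ s) ∧ l.length ≤ n}.Finite := by
  have : Finite s := hs
  refine ((List.finite_length_le s n).image (List.map Subtype.val)).subset ?_
  rintro l ⟨hl, hn⟩
  lift l to List s using hl
  exact ⟨l, by simpa using hn, rfl⟩

lemma List.eq_of_take_eq_of_drop_eq_of_period {α : Type*} {l l' : List α} {K n ρ : ℕ}
    (hρ : 0 < ρ) (hρK : ρ ≤ K) (htake : l.take (2 * K) = l'.take (2 * K))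
    (hdrop : l.drop (n - K) = l'.drop (n - K))
    (hl : ∀ x, K ≤ x → x + K < n → l[x]? = l[x + ρ]?)
    (hl' : ∀ x, K ≤ x → x + K < n → l'[x]? = l'[x + ρ]?) : l = l' := by
  refine List.ext_getElem? fun i => ?_
  induction i using Nat.strong_induction_on with
  | _ i ih =>
    by_cases hpre : i < 2 * K
    · rw [← List.getElem?_take_of_lt hpre, htake, List.getElem?_take_of_lt hpre]
    by_cases hsuf : n ≤ i + K
    · have hi : n - K + (i - (n - K)) = i := by omega
      rw [← hi, ← List.getElem?_drop, hdrop, List.getElem?_drop]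
    obtain ⟨x, rfl⟩ : ∃ x, i = x + ρ := ⟨i - ρ, by omega⟩
    rw [← hl x (by omega) (by omega), ← hl' x (by omega) (by omega)]
    exact ih x (by omega)

lemma List.append_lt_append_of_length_eq {α : Type*} [LT α] {l₁ l₂ : List α} (h : l₁ < l₂)
    (hlen : l₁.length = l₂.length) (w₁ w₂ : List α) : l₁ ++ w₁ < l₂ ++ w₂ := by
  induction h with
  | nil => simp at hlen
  | cons _ ih => exact List.Lex.cons (ih (by simpa using hlen))
  | rel h => exact List.Lex.rel h

section CayleyGraph

variable {G : Type*} [Group G] {S : Set G}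

lemma cayleyGraph_adj_mul {x t : G} (ht : t ∈ S ∪ S⁻¹) (hne : t ≠ 1) :
    (cayleyGraph S).Adj x (x * t) :=
  ⟨by simpa [eq_comm] using hne, by simpa using ht⟩

lemma exists_walk_mul_prod (x : G) {l : List G} (hl : ∀ g ∈ l, g ∈ S ∪ S⁻¹) :
    ∃ p : (cayleyGraph S).Walk x (x * l.prod), p.length ≤ l.length := by
  induction l generalizing x with
  | nil =>
    exact ⟨SimpleGraph.Walk.nil.copy rfl (by simp), by rw [SimpleGraph.Walk.length_copy]; rfl⟩
  | cons t l ih =>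
    obtain ⟨p, hp⟩ := ih (x * t) fun g hg => hl g (by simp [hg])
    rw [List.prod_cons, ← mul_assoc]
    by_cases ht : t = 1
    · subst ht
      exact ⟨p.copy (mul_one x) rfl, by simp; omega⟩
    · exact ⟨.cons (cayleyGraph_adj_mul (hl t (by simp)) ht) p, by simp; omega⟩

lemma dist_one_prod_le {l : List G} (hl : ∀ g ∈ l, g ∈ S ∪ S⁻¹) :
    (cayleyGraph S).dist 1 l.prod ≤ l.length := by
  obtain ⟨p, hp⟩ := exists_walk_mul_prod 1 hl
  simpa using (SimpleGraph.dist_le p).trans hp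

lemma SimpleGraph.Walk.exists_word {x y : G} (p : (cayleyGraph S).Walk x y) :
    ∃ l : List G, (∀ g ∈ l, g ∈ S ∪ S⁻¹) ∧ l.length = p.length ∧ x * l.prod = y := by
  induction p with
  | nil => exact ⟨[], by simp, rfl, by simp⟩
  | @cons x z y h p ih =>
    obtain ⟨l, hl, hlen, hprod⟩ := ih
    refine ⟨(x⁻¹ * z) :: l, fun g hg => ?_, by simp [hlen], by simp [← mul_assoc, hprod]⟩
    rcases List.mem_cons.mp hg with rfl | hg
    exacts [h.2, hl g hg]

lemma cayleyGraph_reachable_one (hgen : Subgroup.closure S = ⊤) (x : G) :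
    (cayleyGraph S).Reachable 1 x := by
  have hx : x ∈ Subgroup.closure S := hgen ▸ Subgroup.mem_top x
  induction hx using Subgroup.closure_induction_right with
  | one => rfl
  | mul_right y _ t ht hy =>
    by_cases h : t = 1
    · simpa [h] using hy
    · exact hy.trans (cayleyGraph_adj_mul (Or.inl ht) h).reachable
  | mul_inv_cancel y _ t ht hy =>
    by_cases h : t = 1
    · simpa [h] using hy
    · exact hy.trans
        (cayleyGraph_adj_mul (Or.inr (by simpa using ht)) (by simpa using h)).reachable

def geodesicWords (S : Set G) (x : G) : Set (List G) :=
  {l | (∀ g ∈ l, g ∈ S ∪ S⁻¹) ∧ l.length = (cayleyGraph S).dist 1 x ∧ l.prod = x}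

lemma geodesicWords_nonempty {x : G} (hx : (cayleyGraph S).Reachable 1 x) :
    (geodesicWords S x).Nonempty := by
  obtain ⟨p, hp⟩ := hx.exists_walk_length_eq_dist
  obtain ⟨l, hl, hlen, hprod⟩ := p.exists_word
  exact ⟨l, hl, hlen.trans hp, by simpa using hprod⟩

lemma geodesicWords_finite (hS : S.Finite) (x : G) : (geodesicWords S x).Finite :=
  ((hS.union hS.inv).setOf_forall_mem_length_le _).subset fun _ hl => ⟨hl.1, hl.2.1.le⟩

lemma mem_geodesicWords_of_append {x : G} {u v w : List G}
    (h : u ++ v ++ w ∈ geodesicWords S x) : v ∈ geodesicWords S v.prod := by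
  obtain ⟨hword, hlen, hprod⟩ := h
  have hv : ∀ g ∈ v, g ∈ S ∪ S⁻¹ := fun g hg => hword g (by simp [hg])
  obtain ⟨p, -⟩ := exists_walk_mul_prod 1 hv
  obtain ⟨l, hl, hllen, hlprod⟩ := geodesicWords_nonempty (by simpa using p.reachable)
  have hshort := dist_one_prod_le (l := u ++ l ++ w) (S := S) fun g hg => by
    simp only [List.mem_append] at hg
    rcases hg with (hg | hg) | hg
    exacts [hword g (by simp [hg]), hl g hg, hword g (by simp [hg])]
  have hlx : (u ++ l ++ w).prod = x := by simp [← hprod, List.prod_append, hlprod]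
  rw [hlx] at hshort
  simp only [List.length_append] at hlen hshort
  exact ⟨hv, le_antisymm (by omega) (dist_one_prod_le hv), rfl⟩

lemma IsLeast.geodesicWords_append [LinearOrder G] {x : G} {u v w : List G}
    (h : IsLeast (geodesicWords S x) (u ++ v ++ w)) : IsLeast (geodesicWords S v.prod) v := by
  refine ⟨mem_geodesicWords_of_append h.1, fun m hm => not_lt.mp fun hmv => ?_⟩
  have hmlen : m.length = v.length := hm.2.1.trans (mem_geodesicWords_of_append h.1).2.1.symm
  have hmem : u ++ m ++ w ∈ geodesicWords S x := by
    obtain ⟨hword, hlen, hprod⟩ := h.1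
    refine ⟨fun g hg => ?_, by simpa [hmlen] using hlen, by simpa [hm.2.2] using hprod⟩
    simp only [List.mem_append] at hg
    rcases hg with (hg | hg) | hg
    exacts [hword g (by simp [hg]), hm.1 g hg, hword g (by simp [hg])]
  exact not_lt.mpr (h.2 hmem)
    (List.append_lt_append_of_length_eq (List.append_left_lt hmv) (by simpa using hmlen) w w)

end CayleyGraph

section Growth

variable {G : Type*} [Group G] {S : Set G}

def cayleyBall (S : Set G) (n : ℕ) : Set G := {x | (cayleyGraph S).dist 1 x ≤ n}

def cayleySphere (S : Set G) (n : ℕ) : Set G := {x | (cayleyGraph S).dist 1 x = n}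

lemma ballCard_eq_ncard (n : ℕ) : ballCard S n = (cayleyBall S n).ncard := rfl

lemma cayleyBall_finite (hS : S.Finite) (hgen : Subgroup.closure S = ⊤) (n : ℕ) :
    (cayleyBall S n).Finite := by
  refine (((hS.union hS.inv).setOf_forall_mem_length_le n).image List.prod).subset fun x hx => ?_
  obtain ⟨l, hl, hlen, rfl⟩ := geodesicWords_nonempty (cayleyGraph_reachable_one hgen x)
  exact ⟨l, ⟨hl, hlen ▸ hx⟩, rfl⟩

lemma cayleySphere_finite (hS : S.Finite) (hgen : Subgroup.closure S = ⊤) (n : ℕ) :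
    (cayleySphere S n).Finite :=
  (cayleyBall_finite hS hgen n).subset fun _ hx => le_of_eq hx

lemma one_le_ballCard (hS : S.Finite) (hgen : Subgroup.closure S = ⊤) (n : ℕ) :
    1 ≤ ballCard S n :=
  (Set.ncard_pos (cayleyBall_finite hS hgen n)).mpr ⟨1, by simp [cayleyBall]⟩

lemma ballCard_succ (hS : S.Finite) (hgen : Subgroup.closure S = ⊤) (n : ℕ) :
    ballCard S (n + 1) = ballCard S n + (cayleySphere S (n + 1)).ncard := by
  have hunion : cayleyBall S (n + 1) = cayleyBall S n ∪ cayleySphere S (n + 1) := by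
    ext x
    simp only [cayleyBall, cayleySphere, Set.mem_ofPred_eq, Set.mem_union]
    omega
  rw [ballCard_eq_ncard, ballCard_eq_ncard, hunion, Set.ncard_union_eq
    (Set.disjoint_left.mpr fun x hx hx' => by simp_all [cayleyBall, cayleySphere])
    (cayleyBall_finite hS hgen n) (cayleySphere_finite hS hgen (n + 1))]

lemma ballCard_le_of_forall_sphere_ncard_le (hS : S.Finite) (hgen : Subgroup.closure S = ⊤)
    {M : ℕ} (hM : ∀ n, (cayleySphere S n).ncard ≤ M) (n : ℕ) :
    ballCard S n ≤ ballCard S 0 + M * n := by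
  induction n with
  | zero => simp
  | succ n ih =>
    rw [ballCard_succ hS hgen, Nat.mul_succ]
    have := hM (n + 1)
    omega

lemma exists_isLeast_geodesicWords [LinearOrder G] (hS : S.Finite)
    (hgen : Subgroup.closure S = ⊤) (x : G) : ∃ l, IsLeast (geodesicWords S x) l := by
  obtain ⟨l, hl, hmin⟩ := Set.exists_min_image _ id (geodesicWords_finite hS x)
    (geodesicWords_nonempty (cayleyGraph_reachable_one hgen x))
  exact ⟨l, hl, hmin⟩

lemma window_mem_image_cayleySphere [LinearOrder G] {cw : G → List G}
    (hcw : ∀ x, IsLeast (geodesicWords S x) (cw x)) (x : G) {K i : ℕ}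
    (hi : i + K ≤ (cw x).length) :
    window (fun j => (cw x)[j]?) K i ∈
      (fun y => window (fun j => (cw y)[j]?) K 0) '' cayleySphere S K := by
  set v := ((cw x).drop i).take K
  have hsplit : cw x = (cw x).take i ++ v ++ (cw x).drop (i + K) := by
    rw [List.append_assoc, ← List.drop_drop, List.take_append_drop, List.take_append_drop]
  have hv := (hsplit ▸ hcw x).geodesicWords_append
  have hvK : v.length = K := by simp only [v, List.length_take, List.length_drop]; omega
  refine ⟨v.prod, hv.1.2.1.symm.trans hvK, funext fun s => ?_⟩
  simp [window, (hcw v.prod).unique hv, v, List.getElem?_take_of_lt s.2, List.getElem?_drop]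

theorem exists_forall_sphere_ncard_le (hS : S.Finite) (hgen : Subgroup.closure S = ⊤) {K : ℕ}
    (hK : (cayleySphere S K).ncard ≤ K) : ∃ M, ∀ n, (cayleySphere S n).ncard ≤ M := by
  classical
  let : LinearOrder G := IsWellOrder.linearOrder WellOrderingRel
  choose cw hcw using exists_isLeast_geodesicWords hS hgen
  have hlen : ∀ x, (cw x).length = (cayleyGraph S).dist 1 x := fun x => (hcw x).1.2.1
  set V := (cayleySphere_finite hS hgen K).toFinset.image
    fun y => window (fun j => (cw y)[j]?) K 0
  have hV : V.card ≤ K :=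
    Finset.card_image_le.trans
      (by rwa [← Set.ncard_eq_toFinset_card _ (cayleySphere_finite hS hgen K)])
  have hwin : ∀ x i, i + K ≤ (cw x).length → window (fun j => (cw x)[j]?) K i ∈ V := by
    intro x i hi
    obtain ⟨y, hy, hyx⟩ := window_mem_image_cayleySphere hcw x hi
    exact Finset.mem_image.mpr ⟨y, by simpa using hy, hyx⟩
  choose ρ hρ using fun x => exists_period_of_card_window_le hV (hwin x)
  set words := {l : List G | (∀ g ∈ l, g ∈ S ∪ S⁻¹) ∧ l.length ≤ 2 * K}
  have hwords : words.Finite := (hS.union hS.inv).setOf_forall_mem_length_le _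
  refine ⟨(words ×ˢ words ×ˢ Set.Iic K).ncard, fun n => ?_⟩
  refine Set.ncard_le_ncard_of_injOn (fun x => ((cw x).take (2 * K), (cw x).drop (n - K), ρ x))
    (fun x hx => ?_) (fun x hx x' hx' hxx' => ?_) (hwords.prod (hwords.prod (Set.finite_Iic K)))
  · have hword := (hcw x).1.1
    refine ⟨⟨fun g hg => hword g (List.mem_of_mem_take hg), List.length_take_le _ _⟩,
      ⟨fun g hg => hword g (List.mem_of_mem_drop hg), ?_⟩, (hρ x).2.1⟩
    rw [List.length_drop, hlen, hx]
    omega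
  · simp only [Prod.mk.injEq] at hxx'
    obtain ⟨htake, hdrop, hρx⟩ := hxx'
    have hρx' := hρ x'
    rw [← hρx] at hρx'
    rw [← (hcw x).1.2.2, ← (hcw x').1.2.2,
      List.eq_of_take_eq_of_drop_eq_of_period (hρ x).1 (hρ x).2.1 htake hdrop
        ((hlen x).trans hx ▸ (hρ x).2.2) ((hlen x').trans hx' ▸ hρx'.2.2)]

end Growth

lemma quadratic_le_of_forall_add_le {b : ℕ → ℕ} (h₀ : 1 ≤ b 0)
    (hstep : ∀ j, b j + (j + 2) ≤ b (j + 1)) (n : ℕ) : (n + 1) * (n + 2) ≤ 2 * b n := by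
  induction n with
  | zero => omega
  | succ n ih => nlinarith [hstep n]

lemma not_forall_quadratic_le_of_linear {b : ℕ → ℕ} {α β : ℝ}
    (h : ∀ n : ℕ, (b n : ℝ) ≤ α * n + β) : ¬ ∀ n : ℕ, (n + 1) * (n + 2) ≤ 2 * b n := by
  intro hquad
  set n := ⌈2 * |α| + 2 * |β|⌉₊ + 1
  have hn : 2 * |α| + 2 * |β| + 1 ≤ (n : ℝ) := by
    push_cast [n]
    linarith [Nat.le_ceil (2 * |α| + 2 * |β|)]
  have hq : ((n : ℝ) + 1) * (n + 2) ≤ 2 * b n := by exact_mod_cast hquad n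
  nlinarith [h n, le_abs_self α, le_abs_self β, abs_nonneg α, abs_nonneg β,
    mul_le_mul_of_nonneg_right (le_abs_self α) (Nat.cast_nonneg n : (0 : ℝ) ≤ n)]

/-- **Wilkie–Van den Dries growth dichotomy.** For the Cayley graph of a finitely generated
group, exactly one of the following holds: either the growth is linear, i.e. there are
`α, β ≥ 0` with `b(n) ≤ αn + β` for all `n`, or `b(n) ≥ (n+1)(n+2)/2` for all `n`. -/
theorem stmt_13 {G : Type*} [Group G] (S : Set G) (hS : S.Finite)
    (hgen : Subgroup.closure S = ⊤) :
    Xor' (∃ α β : ℝ, 0 ≤ α ∧ 0 ≤ β ∧ ∀ n : ℕ, (ballCard S n : ℝ) ≤ α * n + β)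
      (∀ n : ℕ, (n + 1) * (n + 2) ≤ 2 * ballCard S n) := by
  by_cases hstep : ∀ j, ballCard S j + (j + 2) ≤ ballCard S (j + 1)
  · have hquad := quadratic_le_of_forall_add_le (one_le_ballCard hS hgen 0) hstep
    exact Or.inr ⟨hquad, fun ⟨_, _, _, _, hlin⟩ => not_forall_quadratic_le_of_linear hlin hquad⟩
  · obtain ⟨j, hj⟩ := not_forall.mp hstep
    have hsphere : (cayleySphere S (j + 1)).ncard ≤ j + 1 := by
      have := ballCard_succ hS hgen j
      omega
    obtain ⟨M, hM⟩ := exists_forall_sphere_ncard_le hS hgen hsphere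
    have hlin : ∀ n : ℕ, (ballCard S n : ℝ) ≤ M * n + ballCard S 0 := fun n => by
      rw [add_comm]
      exact_mod_cast ballCard_le_of_forall_sphere_ncard_le hS hgen hM n
    exact Or.inl ⟨⟨M, ballCard S 0, by positivity, by positivity, hlin⟩,
      not_forall_quadratic_le_of_linear hlin⟩
end
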